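/- arXiv:1310.5063 — 2 statements merged into one kernel-verified Lean document; each statement's English description precedes it below -/
import Mathlib

section
/- Let k ≥ 1 be an integer and y₀ > 0. Define u on 𝕋 × [0,∞) (𝕋 = ℝ/ℤ) by u(x,y) = e^{2πikx} sinh(2πky)/sinh(2πky₀) for 0 ≤ y ≤ y₀ and u(x,y) = e^{2πikx} e^{−2πk(y−y₀)} for y ≥ y₀. Then u is continuous, u(x,0) = 0, u(x,y₀) = e^{2πikx}, and ∫_0^∞ ∫_0^1 |∇u(x,y)|² dx dy = 4πk/(1 − e^{−4πky₀}), where |∇u|² = |∂_x u|² + |∂_y u|² with |·| the complex modulus. -/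
/-!
`u` is a single Fourier mode `e^{iax} φ(y)` with `a = 2πk`, so `|∇u|² = a² φ² + φ'²` does
not depend on `x` (away from the line `y = y₀`, where `u` has a kink but which is negligible).
On `(0, y₀)` this is `a² (sinh² + cosh²)(ay) / sinh²(ay₀)`, that is
`(a / sinh²(ay₀)) · (sinh · cosh)'(ay)`, with integral `a coth(ay₀)`; on `(y₀, ∞)` it is
`2a² e^{-2a(y - y₀)}`, with integral `a`. Finally
`a (coth T + 1) = a e^T / sinh T = 2a / (1 - e^{-2T})`.
-/

open MeasureTheory Set Filter Topology Complex

section SeparatedVariables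

variable {𝔸 : Type*} [NormedCommRing 𝔸] [NormedAlgebra ℝ 𝔸]

theorem fderiv_apply_of_eventuallyEq_mul {A B : ℝ → 𝔸} {A' B' : 𝔸} {x y : ℝ}
    {u : ℝ × ℝ → 𝔸} (hA : HasDerivAt A A' x) (hB : HasDerivAt B B' y)
    (hu : u =ᶠ[𝓝 (x, y)] fun p => A p.1 * B p.2) :
    fderiv ℝ u (x, y) (1, 0) = A' * B y ∧ fderiv ℝ u (x, y) (0, 1) = A x * B' := by
  have hA₁ : HasFDerivAt (fun p : ℝ × ℝ => A p.1) _ (x, y) :=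
    hA.hasFDerivAt.comp (x, y) hasFDerivAt_fst
  have hB₂ : HasFDerivAt (fun p : ℝ × ℝ => B p.2) _ (x, y) :=
    hB.hasFDerivAt.comp (x, y) hasFDerivAt_snd
  rw [hu.fderiv_eq, (hA₁.fun_mul hB₂).fderiv]
  constructor <;> simp [mul_comm]

end SeparatedVariables

theorem hasDerivAt_exp_mul_I (a x : ℝ) :
    HasDerivAt (fun t : ℝ => exp (a * t * I)) (a * I * exp (a * x * I)) x := by
  have h := ((hasDerivAt_id (x : ℂ)).const_mul (a : ℂ)).mul_const I |>.cexp
  simpa [mul_comm, mul_left_comm] using h.comp_ofReal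

theorem norm_exp_mul_I (a x : ℝ) : ‖exp (a * x * I)‖ = 1 := by
  exact_mod_cast norm_exp_ofReal_mul_I (a * x)

noncomputable def dirichletDensity (u : ℝ × ℝ → ℂ) (p : ℝ × ℝ) : ℝ :=
  ‖fderiv ℝ u p (1, 0)‖ ^ 2 + ‖fderiv ℝ u p (0, 1)‖ ^ 2

theorem dirichletDensity_of_eventuallyEq {a b x y : ℝ} {B : ℝ → ℝ} {u : ℝ × ℝ → ℂ}
    (hB : HasDerivAt B b y) (hu : u =ᶠ[𝓝 (x, y)] fun p => exp (a * p.1 * I) * B p.2) :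
    dirichletDensity u (x, y) = a ^ 2 * B y ^ 2 + b ^ 2 := by
  obtain ⟨hx, hy⟩ :=
    fderiv_apply_of_eventuallyEq_mul (hasDerivAt_exp_mul_I a x) hB.ofReal_comp hu
  rw [dirichletDensity, hx, hy]
  simp [norm_exp_mul_I, mul_pow]

theorem integral_dirichletDensity_of_eqOn {a b y : ℝ} {B : ℝ → ℝ} {U : Set ℝ}
    {u : ℝ × ℝ → ℂ} (hU : IsOpen U) (hy : y ∈ U) (hB : HasDerivAt B b y)
    (hu : ∀ x, ∀ y ∈ U, u (x, y) = exp (a * x * I) * B y) :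
    ∫ x in (0 : ℝ)..1, dirichletDensity u (x, y) = a ^ 2 * B y ^ 2 + b ^ 2 := by
  have hdens (x : ℝ) : dirichletDensity u (x, y) = a ^ 2 * B y ^ 2 + b ^ 2 := by
    refine dirichletDensity_of_eventuallyEq hB ?_
    filter_upwards [(hU.preimage continuous_snd).mem_nhds hy] with p hp
    exact hu p.1 p.2 hp
  simp [hdens]

theorem integral_mul_sinh_sq_add_cosh_sq (a T : ℝ) :
    ∫ y in (0 : ℝ)..T, a * (Real.sinh (a * y) ^ 2 + Real.cosh (a * y) ^ 2) =
      Real.sinh (a * T) * Real.cosh (a * T) := by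
  have hderiv (y : ℝ) : HasDerivAt (fun y => Real.sinh (a * y) * Real.cosh (a * y))
      (a * (Real.sinh (a * y) ^ 2 + Real.cosh (a * y) ^ 2)) y := by
    have hlin : HasDerivAt (fun y => a * y) a y := hasDerivAt_const_mul a
    exact (hlin.sinh.fun_mul hlin.cosh).congr_deriv (by ring)
  rw [intervalIntegral.integral_eq_sub_of_hasDerivAt (fun y _ => hderiv y)
    (by apply Continuous.intervalIntegrable; fun_prop)]
  simp

theorem exp_neg_mul_sub_sq (a c y : ℝ) :
    Real.exp (-(a * (y - c))) ^ 2 = Real.exp (2 * a * c) * Real.exp (-(2 * a) * y) := by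
  rw [← Real.exp_nat_mul, ← Real.exp_add]; ring_nf

theorem integrableOn_exp_neg_mul_sub_sq {a : ℝ} (ha : 0 < a) (c : ℝ) :
    IntegrableOn (fun y => Real.exp (-(a * (y - c))) ^ 2) (Ioi c) := by
  simp_rw [exp_neg_mul_sub_sq]
  exact (integrableOn_exp_mul_Ioi (by linarith) c).const_mul _

theorem integral_exp_neg_mul_sub_sq {a : ℝ} (ha : 0 < a) (c : ℝ) :
    ∫ y in Ioi c, Real.exp (-(a * (y - c))) ^ 2 = 1 / (2 * a) := by
  simp_rw [exp_neg_mul_sub_sq]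
  rw [integral_const_mul, integral_exp_mul_Ioi (by linarith), neg_div_neg_eq,
    ← mul_div_assoc, ← Real.exp_add]
  simp

theorem cosh_div_sinh_add_one {T : ℝ} (hT : T ≠ 0) :
    Real.cosh T / Real.sinh T + 1 = 2 / (1 - Real.exp (-2 * T)) := by
  have hS : Real.sinh T ≠ 0 := by simpa using hT
  rw [div_add_one hS, Real.cosh_add_sinh, Real.sinh_eq]
  have : Real.exp (-2 * T) = Real.exp (-T) / Real.exp T := by
    rw [← Real.exp_sub]; ring_nf
  rw [this]
  field_simp

section HarmonicExtension

variable {a y₀ : ℝ} {u : ℝ × ℝ → ℂ}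

theorem continuousOn_of_eq_sinh_of_eq_exp
    (hu_low : ∀ x y : ℝ, 0 ≤ y → y ≤ y₀ →
      u (x, y) = exp (a * x * I) * (Real.sinh (a * y) / Real.sinh (a * y₀) : ℝ))
    (hu_high : ∀ x y : ℝ, y₀ ≤ y →
      u (x, y) = exp (a * x * I) * Real.exp (-(a * (y - y₀)))) :
    ContinuousOn u {p : ℝ × ℝ | 0 ≤ p.2} := by
  have hsplit : {p : ℝ × ℝ | 0 ≤ p.2} =
      Prod.snd ⁻¹' Icc 0 y₀ ∪ Prod.snd ⁻¹' (Ici 0 ∩ Ici y₀) := by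
    ext p; simp only [mem_union, mem_preimage, mem_Icc, mem_inter_iff, mem_Ici]; grind
  rw [hsplit]
  refine ContinuousOn.union_of_isClosed ?_ ?_ (isClosed_Icc.preimage continuous_snd)
    ((isClosed_Ici.inter isClosed_Ici).preimage continuous_snd)
  · refine ContinuousOn.congr (f := fun p : ℝ × ℝ =>
      exp (a * p.1 * I) * (Real.sinh (a * p.2) / Real.sinh (a * y₀) : ℝ)) (by fun_prop) ?_
    rintro ⟨x, y⟩ ⟨hy0, hy⟩
    exact hu_low x y hy0 hy
  · refine ContinuousOn.congr (f := fun p : ℝ × ℝ =>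
      exp (a * p.1 * I) * Real.exp (-(a * (p.2 - y₀)))) (by fun_prop) ?_
    rintro ⟨x, y⟩ ⟨-, hy⟩
    exact hu_high x y hy

theorem integral_dirichletDensity_of_mem_Ioo
    (hu_low : ∀ x y : ℝ, 0 ≤ y → y ≤ y₀ →
      u (x, y) = exp (a * x * I) * (Real.sinh (a * y) / Real.sinh (a * y₀) : ℝ))
    {y : ℝ} (hy : y ∈ Ioo 0 y₀) :
    ∫ x in (0 : ℝ)..1, dirichletDensity u (x, y) =
      a / Real.sinh (a * y₀) ^ 2 * (a * (Real.sinh (a * y) ^ 2 + Real.cosh (a * y) ^ 2)) := by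
  have hB : HasDerivAt (fun y => Real.sinh (a * y) / Real.sinh (a * y₀))
      (a * Real.cosh (a * y) / Real.sinh (a * y₀)) y :=
    ((hasDerivAt_const_mul a).sinh.div_const _).congr_deriv (by ring)
  rw [integral_dirichletDensity_of_eqOn isOpen_Ioo hy hB
    fun x y hy => hu_low x y hy.1.le hy.2.le]
  ring

theorem integral_dirichletDensity_of_mem_Ioi
    (hu_high : ∀ x y : ℝ, y₀ ≤ y →
      u (x, y) = exp (a * x * I) * Real.exp (-(a * (y - y₀))))
    {y : ℝ} (hy : y ∈ Ioi y₀) :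
    ∫ x in (0 : ℝ)..1, dirichletDensity u (x, y) =
      2 * a ^ 2 * Real.exp (-(a * (y - y₀))) ^ 2 := by
  have hlin : HasDerivAt (fun y => -(a * (y - y₀))) (-a) y := by
    simpa using (((hasDerivAt_id y).sub_const y₀).const_mul a).fun_neg
  have hB : HasDerivAt (fun y => Real.exp (-(a * (y - y₀))))
      (-a * Real.exp (-(a * (y - y₀)))) y :=
    hlin.exp.congr_deriv (by ring)
  rw [integral_dirichletDensity_of_eqOn isOpen_Ioi hy hB
    fun x y hy => hu_high x y (le_of_lt hy)]
  ring

theorem integral_integral_dirichletDensity (ha : 0 < a) (hy₀ : 0 < y₀)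
    (hu_low : ∀ x y : ℝ, 0 ≤ y → y ≤ y₀ →
      u (x, y) = exp (a * x * I) * (Real.sinh (a * y) / Real.sinh (a * y₀) : ℝ))
    (hu_high : ∀ x y : ℝ, y₀ ≤ y →
      u (x, y) = exp (a * x * I) * Real.exp (-(a * (y - y₀)))) :
    ∫ y in Ioi 0, ∫ x in (0 : ℝ)..1, dirichletDensity u (x, y) =
      2 * a / (1 - Real.exp (-2 * (a * y₀))) := by
  set S := Real.sinh (a * y₀)
  have hS : S ≠ 0 := (Real.sinh_pos_iff.mpr (mul_pos ha hy₀)).ne'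
  have hlow := fun y (hy : y ∈ Ioo 0 y₀) => integral_dirichletDensity_of_mem_Ioo hu_low hy
  have hhigh := fun y (hy : y ∈ Ioi y₀) => integral_dirichletDensity_of_mem_Ioi hu_high hy
  have hint_low : IntervalIntegrable (fun y => ∫ x in (0 : ℝ)..1, dirichletDensity u (x, y))
      volume 0 y₀ :=
    (Continuous.intervalIntegrable (by fun_prop : Continuous fun y =>
      a / S ^ 2 * (a * (Real.sinh (a * y) ^ 2 + Real.cosh (a * y) ^ 2))) _ _).congr_uIoo
      (by rw [uIoo_of_le hy₀.le]; exact fun y hy => (hlow y hy).symm)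
  have hint_high : IntegrableOn (fun y => ∫ x in (0 : ℝ)..1, dirichletDensity u (x, y))
      (Ioi y₀) :=
    IntegrableOn.congr_fun ((integrableOn_exp_neg_mul_sub_sq ha y₀).const_mul _)
      (fun y hy => (hhigh y hy).symm) measurableSet_Ioi
  calc _ = (∫ y in (0 : ℝ)..y₀, ∫ x in (0 : ℝ)..1, dirichletDensity u (x, y)) +
        ∫ y in Ioi y₀, ∫ x in (0 : ℝ)..1, dirichletDensity u (x, y) :=
        (intervalIntegral.integral_interval_add_Ioi' hint_low hint_high).symm
    _ = a / S ^ 2 * (S * Real.cosh (a * y₀)) + 2 * a ^ 2 * (1 / (2 * a)) := by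
      rw [intervalIntegral.integral_congr_Ioo_of_le hy₀.le hlow,
        setIntegral_congr_fun measurableSet_Ioi hhigh, intervalIntegral.integral_const_mul,
        integral_mul_sinh_sq_add_cosh_sq, integral_const_mul, integral_exp_neg_mul_sub_sq ha]
    _ = a * (Real.cosh (a * y₀) / S + 1) := by field_simp
    _ = 2 * a / (1 - Real.exp (-2 * (a * y₀))) := by
      rw [cosh_div_sinh_add_one (mul_pos ha hy₀).ne']; ring

end HarmonicExtension

/-- **The harmonic extension minimizing the Dirichlet energy and its energy.**
Let `k ≥ 1`, `y₀ > 0` and let `u(x,y) = e^{2πikx} sinh(2πky)/sinh(2πky₀)` for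
`0 ≤ y ≤ y₀` and `u(x,y) = e^{2πikx} e^{-2πk(y-y₀)}` for `y ≥ y₀`.  Then `u` is continuous
on `𝕋 × [0,∞)`, vanishes for `y = 0`, equals `e^{2πikx}` on `y = y₀`, and its Dirichlet
energy `∫_0^∞ ∫_0^1 (|∂_x u|² + |∂_y u|²) dx dy` equals `4πk/(1 - e^{-4πky₀})`. -/
theorem harmonic_extension_energy (k : ℤ) (hk : 1 ≤ k) (y₀ : ℝ) (hy₀ : 0 < y₀)
    (u : ℝ × ℝ → ℂ)
    (hu_low : ∀ x y : ℝ, 0 ≤ y → y ≤ y₀ →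
      u (x, y) = Complex.exp (2 * Real.pi * Complex.I * k * x) *
        ((Real.sinh (2 * Real.pi * k * y) / Real.sinh (2 * Real.pi * k * y₀) : ℝ) : ℂ))
    (hu_high : ∀ x y : ℝ, y₀ ≤ y →
      u (x, y) = Complex.exp (2 * Real.pi * Complex.I * k * x) *
        ((Real.exp (-(2 * Real.pi * k * (y - y₀))) : ℝ) : ℂ)) :
    ContinuousOn u {p : ℝ × ℝ | 0 ≤ p.2} ∧
    (∀ x : ℝ, u (x, 0) = 0) ∧
    (∀ x : ℝ, u (x, y₀) = Complex.exp (2 * Real.pi * Complex.I * k * x)) ∧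
    (∫ y in Set.Ioi (0 : ℝ), ∫ x in (0 : ℝ)..1,
        (‖fderiv ℝ u (x, y) (1, 0)‖ ^ 2 + ‖fderiv ℝ u (x, y) (0, 1)‖ ^ 2)) =
      4 * Real.pi * k / (1 - Real.exp (-4 * Real.pi * k * y₀)) := by
  have hk₀ : (0 : ℝ) < k := by exact_mod_cast hk
  set a : ℝ := 2 * Real.pi * k with ha_def
  have ha : 0 < a := by positivity
  have hmode (x : ℝ) : Complex.exp (2 * Real.pi * I * k * x) = exp (a * x * I) := by
    rw [ha_def]; push_cast; ring_nf
  simp only [hmode] at hu_low hu_high ⊢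
  refine ⟨continuousOn_of_eq_sinh_of_eq_exp hu_low hu_high, fun x => ?_, fun x => ?_, ?_⟩
  · simp [hu_low x 0 le_rfl hy₀.le]
  · simp [hu_high x y₀ le_rfl]
  · rw [show 4 * Real.pi * k = 2 * a by ring,
      show -4 * Real.pi * k * y₀ = -2 * (a * y₀) by ring]
    exact integral_integral_dirichletDensity ha hy₀ hu_low hu_high
end

section
/- Let N ≥ 1 and J ≥ 3 be integers, and let A ⊆ ℤ_N × ℤ be a finite set of cardinality T that is connected in the nearest-neighbor graph of ℤ_N × ℤ, contains a point whose second coordinate is ≤ 0, and contains a point whose second coordinate is ≥ J·N. Then there exists n' ∈ A with N ≤ n'₂ ≤ J·N such that #{m ∈ A : n'₂ − N/2 ≤ m₂ < n'₂ + N/2} ≤ T/(J − 2). -/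
/-!
Put `J - 2` pairwise disjoint bands of width `N` around the heights `k N`, `1 ≤ k ≤ J - 2`.
Together they hold at most `T` points of `A`, so one of them holds at most `T / (J - 2)`.
A nearest-neighbor path in `A` from height `≤ 0` to height `≥ J N` raises the height by at
most one per step, so it passes through the exact height `k N`, which gives the point `n'`.
-/

def cylAdj {N : ℕ} (m n : ZMod N × ℤ) : Prop :=
  (m.1 = n.1 ∧ (m.2 = n.2 + 1 ∨ m.2 = n.2 - 1)) ∨
    (m.2 = n.2 ∧ (m.1 = n.1 + 1 ∨ m.1 = n.1 - 1))

theorem Relation.ReflTransGen.exists_eq_of_le_of_le {α : Type*} {r : α → α → Prop}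
    {P : α → Prop} {f : α → ℤ} (hr : ∀ a b, r a b → P b ∧ f b ≤ f a + 1) {x y : α}
    (hxy : Relation.ReflTransGen r x y) (hx : P x) {c : ℤ} (hxc : f x ≤ c) (hcy : c ≤ f y) :
    ∃ z, P z ∧ f z = c := by
  induction hxy with
  | refl => exact ⟨x, hx, le_antisymm hxc hcy⟩
  | @tail b b' _ hbb' ih =>
    by_cases hcb : c ≤ f b
    · exact ih hcb
    · obtain ⟨hb', hb'b⟩ := hr b b' hbb'
      exact ⟨b', hb', by omega⟩

theorem cylAdj.snd_le_add_one {N : ℕ} {a b : ZMod N × ℤ} (h : cylAdj a b) : b.2 ≤ a.2 + 1 := by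
  rcases h with ⟨_, h | h⟩ | ⟨h, _⟩ <;> omega

def band (α : Type*) (c : ℤ) (w : ℝ) : Set (α × ℤ) :=
  {m | (c : ℝ) - w / 2 ≤ (m.2 : ℝ) ∧ (m.2 : ℝ) < (c : ℝ) + w / 2}

theorem disjoint_band_of_add_le {α : Type*} {c d : ℤ} {w : ℝ} (h : c + w ≤ d) :
    Disjoint (band α c w) (band α d w) :=
  Set.disjoint_left.mpr fun _ ⟨_, hc⟩ ⟨hd, _⟩ => by linarith

theorem pairwise_disjoint_band_mul (α : Type*) (N : ℕ) :
    Pairwise fun k l : ℕ => Disjoint (band α (k * N) N) (band α (l * N) N) := by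
  have hlt : ∀ {k l : ℕ}, k < l → Disjoint (band α (k * N) N) (band α (l * N) N) :=
    fun {k l} hkl => disjoint_band_of_add_le <| by
      have : (k : ℝ) + 1 ≤ l := by exact_mod_cast hkl
      push_cast
      nlinarith [N.cast_nonneg (α := ℝ)]
  intro k l hkl
  rcases lt_or_gt_of_ne hkl with h | h
  · exact hlt h
  · exact (hlt h).symm

theorem sum_ncard_inter_le_ncard {ι α : Type*} {A : Set α} (hA : A.Finite) {s : Finset ι}
    {B : ι → Set α} (hB : (s : Set ι).PairwiseDisjoint B) :
    ∑ i ∈ s, (A ∩ B i).ncard ≤ A.ncard := by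
  have hdisj : (s : Set ι).PairwiseDisjoint fun i => A ∩ B i :=
    hB.mono fun i => Set.inter_subset_right
  rw [← finsum_mem_coe_finset, ← s.finite_toSet.ncard_biUnion
    (fun i _ => hA.subset Set.inter_subset_left) hdisj]
  exact Set.ncard_le_ncard (Set.iUnion₂_subset fun i _ => Set.inter_subset_left) hA

theorem Finset.exists_le_div_card_of_sum_le {ι : Type*} {s : Finset ι} (hs : s.Nonempty)
    {f : ι → ℝ} {T : ℝ} (h : ∑ i ∈ s, f i ≤ T) : ∃ i ∈ s, f i ≤ T / s.card := by
  refine s.exists_le_of_sum_le hs ?_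
  rwa [Finset.sum_const, nsmul_eq_mul, mul_div_cancel₀ _ (by simp [hs.ne_empty])]

theorem connected_set_sparse_band_general (N J : ℕ) (hJ : 3 ≤ J)
    (A : Set (ZMod N × ℤ)) (hfin : A.Finite) (T : ℕ) (hcard : A.ncard = T)
    (hconn : ∀ x ∈ A, ∀ y ∈ A,
      Relation.ReflTransGen (fun a b => a ∈ A ∧ b ∈ A ∧ cylAdj a b) x y)
    (hlow : ∃ n ∈ A, n.2 ≤ 0) (hhigh : ∃ n ∈ A, (J * N : ℤ) ≤ n.2) :
    ∃ n' ∈ A, (N : ℤ) ≤ n'.2 ∧ n'.2 ≤ (J * N : ℤ) ∧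
      ((A ∩ {m : ZMod N × ℤ |
          (n'.2 : ℝ) - N / 2 ≤ (m.2 : ℝ) ∧ (m.2 : ℝ) < (n'.2 : ℝ) + N / 2}).ncard : ℝ)
        ≤ (T : ℝ) / ((J : ℝ) - 2) := by
  obtain ⟨x, hx, hx0⟩ := hlow
  obtain ⟨y, hy, hyJ⟩ := hhigh
  have hsum : ∑ k ∈ Finset.Icc 1 (J - 2), ((A ∩ band _ (k * N) N).ncard : ℝ) ≤ T := by
    exact_mod_cast hcard ▸
      sum_ncard_inter_le_ncard hfin ((pairwise_disjoint_band_mul _ N).set_pairwise _)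
  obtain ⟨k, hk, hkT⟩ :=
    Finset.exists_le_div_card_of_sum_le (Finset.nonempty_Icc.mpr (by omega)) hsum
  rw [Nat.card_Icc, Nat.add_sub_cancel, Nat.cast_sub (by omega)] at hkT
  obtain ⟨hk1, hkJ⟩ := Finset.mem_Icc.mp hk
  have hkN : (N : ℤ) ≤ k * N ∧ k * N ≤ (J * N : ℤ) := by
    have : (1 : ℤ) ≤ k ∧ (k : ℤ) ≤ J := by omega
    constructor <;> nlinarith [N.cast_nonneg (α := ℤ)]
  obtain ⟨n', hn', hn'k⟩ :=
    (hconn x hx y hy).exists_eq_of_le_of_le (fun _ _ h => ⟨h.2.1, h.2.2.snd_le_add_one⟩) hx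
      (c := k * N) (hx0.trans (by positivity)) (by omega)
  refine ⟨n', hn', by omega, by omega, ?_⟩
  simpa [band, hn'k] using hkT

/-- **A connected set crossing many bands has a sparse band.**  If `A ⊆ ℤ_N × ℤ` is a
finite connected set of cardinality `T` containing a point of height `≤ 0` and a point of
height `≥ J·N` (with `N ≥ 1`, `J ≥ 3`), then some `n' ∈ A` with `N ≤ n'₂ ≤ J·N` satisfies
`#{m ∈ A : n'₂ - N/2 ≤ m₂ < n'₂ + N/2} ≤ T/(J-2)`. -/
theorem connected_set_sparse_band (N J : ℕ) (hN : 1 ≤ N) (hJ : 3 ≤ J)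
    (A : Set (ZMod N × ℤ)) (hfin : A.Finite) (T : ℕ) (hcard : A.ncard = T)
    (hconn : ∀ x ∈ A, ∀ y ∈ A,
      Relation.ReflTransGen (fun a b => a ∈ A ∧ b ∈ A ∧ cylAdj a b) x y)
    (hlow : ∃ n ∈ A, n.2 ≤ 0) (hhigh : ∃ n ∈ A, (J * N : ℤ) ≤ n.2) :
    ∃ n' ∈ A, (N : ℤ) ≤ n'.2 ∧ n'.2 ≤ (J * N : ℤ) ∧
      ((A ∩ {m : ZMod N × ℤ |
          (n'.2 : ℝ) - N / 2 ≤ (m.2 : ℝ) ∧ (m.2 : ℝ) < (n'.2 : ℝ) + N / 2}).ncard : ℝ)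
        ≤ (T : ℝ) / ((J : ℝ) - 2) :=
  connected_set_sparse_band_general N J hJ A hfin T hcard hconn hlow hhigh
end
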